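/- Let L : H → G be bounded linear with 0 < ‖L‖ ≤ 1 and let B be a strictly positive bounded operator on G. For γ > 0 set Ψ = Id_G − L ∘ L* and define the resolvent cocomposition L ⊡_γ B = L* ∘ (B⁻¹ + γΨ)⁻¹ ∘ L. Then L ⊡_γ B is a positive bounded operator on H. -/

import Mathlib

open ContinuousLinearMap MeasureTheory

noncomputable section

variable {E : Type*} [NormedAddCommGroup E] [InnerProductSpace ℝ E] [CompleteSpace E]
variable {H G : Type*} [NormedAddCommGroup H] [InnerProductSpace ℝ H] [CompleteSpace H]
  [NormedAddCommGroup G] [InnerProductSpace ℝ G] [CompleteSpace G]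

/-- Löwner partial order: `A ≼ B` iff `B - A` is a positive operator. -/
def Loewner (A B : E →L[ℝ] E) : Prop := (B - A).IsPositive

/-- Strictly positive operators: `α • Id ≼ A` for some `α > 0`. -/
def StrictlyPos (A : E →L[ℝ] E) : Prop :=
  IsSelfAdjoint A ∧ ∃ α : ℝ, 0 < α ∧ Loewner (α • (1 : E →L[ℝ] E)) A

/-- Bounded below linear operator. -/
def BoundedBelow (L : H →L[ℝ] G) : Prop := ∃ β : ℝ, 0 < β ∧ ∀ x : H, β * ‖x‖ ≤ ‖L x‖

/-- Resolvent cocomposition `L ⊡_γ B = L* ∘ (B⁻¹ + γ(Id − L L*))⁻¹ ∘ L`. -/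
def rcc (L : H →L[ℝ] G) (γ : ℝ) (B : G →L[ℝ] G) : H →L[ℝ] H :=
  (adjoint L) ∘L (Ring.inverse (Ring.inverse B + γ • ((1 : G →L[ℝ] G) - L ∘L adjoint L))) ∘L L

/-- Resolvent composition `L ⊙_γ B = (L ⊡_{1/γ} B⁻¹)⁻¹`. -/
def rc (L : H →L[ℝ] G) (γ : ℝ) (B : G →L[ℝ] G) : H →L[ℝ] H :=
  Ring.inverse (rcc L (1/γ) (Ring.inverse B))

/-- Parallel composition `L* ▸ B = (L* ∘ B⁻¹ ∘ L)⁻¹`. -/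
def parallelComp (L : H →L[ℝ] G) (B : G →L[ℝ] G) : H →L[ℝ] H :=
  Ring.inverse ((adjoint L) ∘L (Ring.inverse B) ∘L L)

/-- `g(A,B) = inf {λ > 0 : A ≼ λ B}`. -/
def gThomp (A B : E →L[ℝ] E) : ℝ := sInf {l : ℝ | 0 < l ∧ Loewner A (l • B)}

/-- Thompson metric. -/
def dThomp (A B : E →L[ℝ] E) : ℝ := Real.log (max (gThomp A B) (gThomp B A))

/-- The (unique) positive square root of a positive operator. -/
def opSqrt (A : E →L[ℝ] E) : E →L[ℝ] E :=
  letI := Classical.propDecidable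
  if h : ∃ S : E →L[ℝ] E, S.IsPositive ∧ S * S = A then h.choose else 0

/-- Real power `A^t` of a strictly positive operator, `t ∈ (0,1)`, via the
Balakrishnan integral formula `A^t = (sin (π t)/π) ∫₀^∞ s^{t-1} A (A + s)⁻¹ ds`. -/
def opRpow (A : E →L[ℝ] E) (t : ℝ) : E →L[ℝ] E :=
  (Real.sin (Real.pi * t) / Real.pi) •
    ∫ s in Set.Ioi (0 : ℝ), s ^ (t - 1) • (A * Ring.inverse (A + s • (1 : E →L[ℝ] E)))

/-- Geometric mean `A # B = A^{1/2} (A^{-1/2} B A^{-1/2})^{1/2} A^{1/2}`. -/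
def geomMean (A B : E →L[ℝ] E) : E →L[ℝ] E :=
  opSqrt A * opSqrt (Ring.inverse (opSqrt A) * B * Ring.inverse (opSqrt A)) * opSqrt A

/-- `t`-weighted geometric mean `A #_t B = A^{1/2} (A^{-1/2} B A^{-1/2})^t A^{1/2}`. -/
def wGeomMean (t : ℝ) (A B : E →L[ℝ] E) : E →L[ℝ] E :=
  opSqrt A * opRpow (Ring.inverse (opSqrt A) * B * Ring.inverse (opSqrt A)) t * opSqrt A

/-! A strictly positive operator is coercive, so it is invertible and its inverse is again
coercive. As `‖L‖ ≤ 1`, `Ψ = 1 - L L*` is positive, hence `B⁻¹ + γΨ` is strictly positive and its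
inverse is positive; conjugation `T ↦ L* T L` preserves positivity. -/

open InnerProductSpace

section StrictlyPos

variable {A P : E →L[ℝ] E}

theorem strictlyPos_iff :
    StrictlyPos A ↔ IsSelfAdjoint A ∧ ∃ α : ℝ, 0 < α ∧ ∀ x, α * ‖x‖ ^ 2 ≤ ⟪A x, x⟫_ℝ := by
  refine and_congr_right fun hA => exists_congr fun α => and_congr_right fun _ => ?_
  have hsa : IsSelfAdjoint (A - α • 1) :=
    hA.sub (.smul (.all α) (.one _))
  simp only [Loewner, isPositive_iff', hsa, true_and, sub_apply, smul_apply, one_apply_eq_self,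
    inner_sub_left, real_inner_smul_left, real_inner_self_eq_norm_sq, sub_nonneg]

theorem StrictlyPos.isPositive (hA : StrictlyPos A) : A.IsPositive := by
  obtain ⟨-, α, hα, hαA⟩ := hA
  simpa using hαA.add (isPositive_one.smul_of_nonneg hα.le)

theorem StrictlyPos.add_isPositive (hA : StrictlyPos A) (hP : P.IsPositive) :
    StrictlyPos (A + P) := by
  obtain ⟨hAsa, α, hα, hαA⟩ := hA
  refine ⟨hAsa.add hP.isSelfAdjoint, α, hα, ?_⟩
  simpa only [Loewner, add_sub_right_comm] using hαA.add hP

theorem StrictlyPos.isUnit (hA : StrictlyPos A) : IsUnit A := by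
  obtain ⟨-, α, hα, hαA⟩ := strictlyPos_iff.mp hA
  refine isUnit_of_forall_le_norm_inner_map A (c := ⟨α, hα.le⟩) hα fun x => ?_
  calc ‖x‖ ^ 2 * α ≤ ⟪A x, x⟫_ℝ := by linarith [hαA x]
    _ ≤ ‖⟪A x, x⟫_ℝ‖ := Real.le_norm_self _

theorem StrictlyPos.ringInverse (hA : StrictlyPos A) : StrictlyPos (Ring.inverse A) := by
  obtain ⟨hAsa, α, hα, hαA⟩ := strictlyPos_iff.mp hA
  have hinv : ∀ x, A (Ring.inverse A x) = x := fun x => by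
    rw [← mul_apply_eq_comp, Ring.mul_inverse_cancel A hA.isUnit, one_apply_eq_self]
  -- `‖A‖ + 1` rather than `‖A‖`, which vanishes on the zero space
  refine strictlyPos_iff.mpr ⟨?_, α / (‖A‖ + 1) ^ 2, by positivity, fun x => ?_⟩
  · rw [IsSelfAdjoint, ← Ring.inverse_star, hAsa.star_eq]
  set y := Ring.inverse A x
  have hxy : ‖x‖ ≤ (‖A‖ + 1) * ‖y‖ := calc
    ‖x‖ = ‖A y‖ := by rw [hinv]
    _ ≤ ‖A‖ * ‖y‖ := A.le_opNorm y
    _ ≤ (‖A‖ + 1) * ‖y‖ := by gcongr; linarith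
  have hyx : ⟪y, x⟫_ℝ = ⟪A y, y⟫_ℝ := by rw [hinv, real_inner_comm]
  rw [div_mul_eq_mul_div, div_le_iff₀ (by positivity), hyx]
  calc α * ‖x‖ ^ 2 ≤ α * ((‖A‖ + 1) * ‖y‖) ^ 2 := by gcongr
    _ = α * ‖y‖ ^ 2 * (‖A‖ + 1) ^ 2 := by ring
    _ ≤ ⟪A y, y⟫_ℝ * (‖A‖ + 1) ^ 2 := by gcongr; exact hαA y

end StrictlyPos

theorem isPositive_one_sub_comp_adjoint {L : H →L[ℝ] G} (hL : ‖L‖ ≤ 1) :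
    (1 - L ∘L adjoint L).IsPositive := by
  refine (isPositive_iff' _).mpr ⟨?_, fun x => ?_⟩
  · exact (IsSelfAdjoint.one _).sub (isPositive_self_comp_adjoint L).isSelfAdjoint
  have hLx : ‖adjoint L x‖ ≤ ‖x‖ := calc
    ‖adjoint L x‖ ≤ ‖adjoint L‖ * ‖x‖ := (adjoint L).le_opNorm x
    _ ≤ ‖x‖ := by rw [LinearIsometryEquiv.norm_map]; exact mul_le_of_le_one_left (norm_nonneg x) hL
  rw [sub_apply, one_apply_eq_self, comp_apply, inner_sub_left, ← adjoint_inner_right,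
    real_inner_self_eq_norm_sq, real_inner_self_eq_norm_sq, sub_nonneg]
  gcongr

theorem rcc_isPositive (L : H →L[ℝ] G) (hL1 : ‖L‖ ≤ 1)
    (B : G →L[ℝ] G) (hB : StrictlyPos B) (γ : ℝ) (hγ : 0 < γ) :
    (rcc L γ B).IsPositive :=
  have hΨ := (isPositive_one_sub_comp_adjoint hL1).smul_of_nonneg hγ.le
  (hB.ringInverse.add_isPositive hΨ).ringInverse.isPositive.adjoint_conj L

end
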